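/- Let (X,d) be a separable metric space such that the action (Iso(X),X) is Cauchy-indivisible. Then the map ω : E × (X ∪ X_p) → (X ∪ X_p) × X̂ defined by ω(f,y) = (y, f y) is a proper map. -/

import Mathlib

/-!
Every element of the Ellis semigroup `E` is an isometry of `X̂`, so `ω` is continuous, and since
`X` is separable the pointwise topologies of `E` and of `Iso(X)` are already determined on
countable dense sets, hence metrizable; properness thus reduces to extracting convergent
subsequences. Let `f_n ∈ E` with `(f_n y)` Cauchy. If `y = x ∈ X`, approximate `f_n` by lifts `ĝ_n`
at `x` and along a dense sequence; then `(g_n x)` is Cauchy, so either `(g_n)` has a convergent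
subsequence in `Iso(X)`, or it diverges and Cauchy-indivisibility makes `(g_n z)` Cauchy for every
`z`, so that `ĝ_n` converges pointwise on `X̂`. If `y ∈ X_p`, then `y = p x` where `p = lim ĝ_n` and
`q = lim ĝ_n⁻¹` lie in `E` with `p ∘ q = id`; the first case applied to `f_n ∘ p` yields a limit
`F`, and `f_n = f_n ∘ p ∘ q` subconverges to `F ∘ q`.
-/

open Filter Topology Set UniformSpace

noncomputable section

/-- The topology of pointwise convergence on the group of surjective isometries of `X`. -/
instance isoPointwiseTopology (X : Type*) [MetricSpace X] : TopologicalSpace (X ≃ᵢ X) :=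
  TopologicalSpace.induced (fun g => (g : X → X)) Pi.topologicalSpace

/-- A net `g` diverges (`g_i → ∞`), i.e. it has no convergent subnet; equivalently,
no cluster point. -/
def DivergentNet {G : Type*} [TopologicalSpace G] {ι : Type*} [Preorder ι]
    (g : ι → G) : Prop :=
  ∀ h : G, ¬ MapClusterPt h atTop g

/-- A sequence `g` diverges (`g_n → ∞`), i.e. it has no convergent subsequence. -/
def DivergentSeq {G : Type*} [TopologicalSpace G] (g : ℕ → G) : Prop :=
  ∀ φ : ℕ → ℕ, StrictMono φ → ∀ h : G, ¬ Tendsto (g ∘ φ) atTop (𝓝 h)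

/-- The natural evaluation action of `Iso(X)` on `X` is Cauchy-indivisible: whenever a
net `g` in `Iso(X)` has no convergent subnet and `(g_i x)` is a Cauchy net for some
`x`, then `(g_i y)` is a Cauchy net for every `y`. -/
def IsoCauchyIndivisible (X : Type*) [MetricSpace X] : Prop :=
  ∀ (ι : Type*) [Nonempty ι] [Preorder ι] [IsDirected ι (· ≤ ·)],
    ∀ g : ι → X ≃ᵢ X, DivergentNet g →
      (∃ x : X, Cauchy (map (fun i => g i x) atTop)) →
      ∀ y : X, Cauchy (map (fun i => g i y) atTop)

/-- Properness of the isometric evaluation action, expressed through emptiness of all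
limit sets `L(x)`: no net in `Iso(X)` without convergent subnet has `(g_i x)`
converging in `X`. -/
def IsoProperLimits (X : Type*) [MetricSpace X] : Prop :=
  ∀ (ι : Type*) [Nonempty ι] [Preorder ι] [IsDirected ι (· ≤ ·)],
    ∀ g : ι → X ≃ᵢ X, DivergentNet g →
      ∀ x y : X, ¬ Tendsto (fun i => g i x) atTop (𝓝 y)

/-- The canonical lift `ĝ` of an isometry of `X` to the completion `X̂`. -/
def hatIso {X : Type*} [MetricSpace X] (g : X ≃ᵢ X) : Completion X → Completion X :=
  Completion.map (g : X → X)

/-- The lifted group `{ĝ : g ∈ Iso(X)}` inside the selfmaps of `X̂`. -/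
def hatIsoSet (X : Type*) [MetricSpace X] : Set (Completion X → Completion X) :=
  Set.range (hatIso (X := X))

/-- The Ellis semigroup `E`: the closure of the lifted group `{ĝ}` in the topology of
pointwise convergence on selfmaps of `X̂`. -/
def Ellis (X : Type*) [MetricSpace X] : Set (Completion X → Completion X) :=
  closure (hatIsoSet X)

/-- The set `H` of pointwise limits on `X̂` of divergent sequences of lifted isometries. -/
def Hset (X : Type*) [MetricSpace X] : Set (Completion X → Completion X) :=
  { h | Continuous h ∧ ∃ g : ℕ → X ≃ᵢ X, DivergentSeq g ∧
      Tendsto (fun n => hatIso (g n)) atTop (𝓝 h) }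

/-- The set `X_l ⊆ X̂` of limit points of the action `(Iso(X), X)` in the completion. -/
def Xl (X : Type*) [MetricSpace X] : Set (Completion X) :=
  { y | ∃ (g : ℕ → X ≃ᵢ X) (x : X), DivergentSeq g ∧
      CauchySeq (fun n => g n x) ∧
      Tendsto (fun n => ((g n x : X) : Completion X)) atTop (𝓝 y) }

/-- The set `X_p ⊆ X̂` of special limit points of the action `(Iso(X), X)`. -/
def Xp (X : Type*) [MetricSpace X] : Set (Completion X) :=
  { y | ∃ (g : ℕ → X ≃ᵢ X) (x : X), DivergentSeq g ∧
      CauchySeq (fun n => g n x) ∧ CauchySeq (fun n => (g n).symm x) ∧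
      Tendsto (fun n => ((g n x : X) : Completion X)) atTop (𝓝 y) }

/-- `X ∪ X_l`, with `X` identified with its image in the completion `X̂`. -/
def XcupXl (X : Type*) [MetricSpace X] : Set (Completion X) :=
  Set.range ((↑) : X → Completion X) ∪ Xl X

/-- `X ∪ X_p`, with `X` identified with its image in the completion `X̂`. -/
def XcupXp (X : Type*) [MetricSpace X] : Set (Completion X) :=
  Set.range ((↑) : X → Completion X) ∪ Xp X

/-- The Ellis semigroup is a group: every element has a two-sided inverse in `E`
(under composition). -/
def EllisIsGroup (X : Type*) [MetricSpace X] : Prop :=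
  ∀ f ∈ Ellis X, ∃ g ∈ Ellis X, f ∘ g = id ∧ g ∘ f = id

open Function TopologicalSpace

section Equicontinuity

lemma equicontinuous_of_forall_isometry {ι Y Z : Type*} [PseudoMetricSpace Y]
    [PseudoMetricSpace Z] {u : ι → Y → Z} (hu : ∀ i, Isometry (u i)) : Equicontinuous u :=
  (LipschitzWith.uniformEquicontinuous u 1 fun i => (hu i).lipschitz).equicontinuous

lemma Equicontinuous.tendsto_of_dense {ι Y Z : Type*} [TopologicalSpace Y] [UniformSpace Z]
    {u : ι → Y → Z} (hu : Equicontinuous u) {F : Y → Z} (hF : Continuous F) {l : Filter ι}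
    {D : Set Y} (hD : Dense D) (h : ∀ y ∈ D, Tendsto (u · y) l (𝓝 (F y))) :
    Tendsto u l (𝓝 F) :=
  tendsto_pi_nhds.2 fun y => (hu.isClosed_setOfPred_tendsto hF).closure_subset_iff.2 h (hD y)

lemma Equicontinuous.isInducing_restrict {S Y Z : Type*} [TopologicalSpace S] [TopologicalSpace Y]
    [UniformSpace Z] {F : S → Y → Z} (hF : IsInducing F) (hFeq : Equicontinuous F) {D : Set Y}
    (hD : Dense D) : IsInducing fun i (d : D) => F i d := by
  have hcont : Continuous fun i (d : D) => F i d :=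
    continuous_pi fun d => (continuous_apply (d : Y)).comp hF.continuous
  refine isInducing_iff_nhds.2 fun i => le_antisymm (hcont.tendsto i).le_comap ?_
  rw [hF.nhds_eq_comap, ← tendsto_iff_comap]
  exact hFeq.tendsto_of_dense (hFeq.continuous i) hD fun y hy =>
    tendsto_pi_nhds.1 (tendsto_comap (f := fun i (d : D) => F i d)) ⟨y, hy⟩

lemma Equicontinuous.isClosed_setOf_cauchySeq {Y Z : Type*} [TopologicalSpace Y]
    [PseudoMetricSpace Z] {u : ℕ → Y → Z} (hu : Equicontinuous u) :
    IsClosed {y | CauchySeq fun n => u n y} := by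
  refine closure_subset_iff_isClosed.1 fun y hy => Metric.cauchySeq_iff.2 fun ε hε => ?_
  obtain ⟨t, hyt, ht⟩ := ((Metric.equicontinuousAt_iff_right.1 (hu y) (ε / 3)
    (by positivity)).and_frequently (mem_closure_iff_frequently.1 hy)).exists
  obtain ⟨N, hN⟩ := Metric.cauchySeq_iff.1 ht (ε / 3) (by positivity)
  refine ⟨N, fun m hm n hn => ?_⟩
  linarith [dist_triangle4 (u m y) (u m t) (u n t) (u n y), hyt m, hyt n, hN m hm n hn,
    dist_comm (u n t) (u n y)]

lemma tendsto_apply_iff_of_isometry {ι Y Z : Type*} [PseudoMetricSpace Y] [PseudoMetricSpace Z]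
    {u : ι → Y → Z} (hu : ∀ i, Isometry (u i)) {l : Filter ι} {a : ι → Y} {b : Y} {z : Z}
    (ha : Tendsto a l (𝓝 b)) :
    Tendsto (fun i => u i (a i)) l (𝓝 z) ↔ Tendsto (fun i => u i b) l (𝓝 z) := by
  have hdist : ∀ i, dist (u i (a i)) (u i b) = dist (a i) b := fun i => (hu i).dist_eq _ _
  exact tendsto_iff_of_dist (by simpa only [hdist] using tendsto_iff_dist_tendsto_zero.1 ha)

lemma continuous_eval_of_isometry {S Y Z : Type*} [TopologicalSpace S] [PseudoMetricSpace Y]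
    [PseudoMetricSpace Z] {F : S → Y → Z} (hF : Continuous F) (hiso : ∀ s, Isometry (F s)) :
    Continuous fun p : S × Y => F p.1 p.2 :=
  continuous_iff_continuousAt.2 fun p =>
    (tendsto_apply_iff_of_isometry (fun q : S × Y => hiso q.1) continuousAt_snd).2
      ((continuous_apply p.2).comp (hF.comp continuous_fst)).continuousAt

lemma exists_seq_dist_tendsto_zero_of_mem_closure_range {α Y Z : Type*} [PseudoMetricSpace Z]
    {v : α → Y → Z} {f : ℕ → Y → Z} (hf : ∀ n, f n ∈ closure (range v)) (s : ℕ → Y) :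
    ∃ c : ℕ → α, ∀ k, Tendsto (fun n => dist (f n (s k)) (v (c n) (s k))) atTop (𝓝 0) := by
  have happrox : ∀ n, ∃ c, ∀ k ∈ Iic n, dist (f n (s k)) (v c (s k)) < 1 / (n + 1) := by
    intro n
    have hnear : ∀ᶠ u in 𝓝 (f n), ∀ k ∈ Iic n, dist (f n (s k)) (u (s k)) < 1 / (n + 1) :=
      (eventually_all_finite (finite_Iic n)).2 fun k _ =>
        (tendsto_const_nhds.dist ((continuous_apply (s k)).tendsto (f n))).eventually
          (eventually_lt_nhds (by rw [dist_self]; positivity))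
    obtain ⟨_, hu, c, rfl⟩ := (hnear.and_frequently (mem_closure_iff_frequently.1 (hf n))).exists
    exact ⟨c, hu⟩
  choose c hc using happrox
  refine ⟨c, fun k => squeeze_zero' (Eventually.of_forall fun n => dist_nonneg) ?_
    tendsto_one_div_add_atTop_nhds_zero_nat⟩
  filter_upwards [eventually_ge_atTop k] with n hn using (hc n k hn).le

end Equicontinuity

section IsometryGroup

variable {X : Type*} [MetricSpace X]

lemma isInducing_isometryEquiv_coe : IsInducing fun g : X ≃ᵢ X => (g : X → X) := ⟨rfl⟩

lemma tendsto_isometryEquiv_iff {ι : Type*} {l : Filter ι} {g : ι → X ≃ᵢ X} {h : X ≃ᵢ X} :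
    Tendsto g l (𝓝 h) ↔ ∀ x, Tendsto (fun i => g i x) l (𝓝 (h x)) := by
  rw [isInducing_isometryEquiv_coe.tendsto_nhds_iff, tendsto_pi_nhds]
  rfl

lemma tendsto_isometryEquiv_symm {ι : Type*} {l : Filter ι} {g : ι → X ≃ᵢ X} {h : X ≃ᵢ X}
    (hg : Tendsto g l (𝓝 h)) : Tendsto (fun i => (g i).symm) l (𝓝 h.symm) := by
  refine tendsto_isometryEquiv_iff.2 fun x => tendsto_iff_dist_tendsto_zero.2 ?_
  have hdist : ∀ i, dist ((g i).symm x) (h.symm x) = dist (g i (h.symm x)) x := fun i => by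
    rw [← (g i).dist_eq, IsometryEquiv.apply_symm_apply, dist_comm]
  simpa only [hdist, h.apply_symm_apply] using
    tendsto_iff_dist_tendsto_zero.1 (tendsto_isometryEquiv_iff.1 hg (h.symm x))

instance [SeparableSpace X] : PseudoMetrizableSpace (X ≃ᵢ X) := by
  obtain ⟨D, hDc, hD⟩ := exists_countable_dense X
  have := hDc.to_subtype
  exact ((equicontinuous_of_forall_isometry fun g : X ≃ᵢ X => g.isometry).isInducing_restrict
    isInducing_isometryEquiv_coe hD).pseudoMetrizableSpace

lemma DivergentSeq.divergentNet {G : Type*} [TopologicalSpace G] [FirstCountableTopology G]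
    {g : ℕ → G} (h : DivergentSeq g) : DivergentNet g := fun x hx =>
  let ⟨φ, hφ, hgx⟩ := hx.tendsto_subseq
  h φ hφ x hgx

lemma DivergentSeq.symm {g : ℕ → X ≃ᵢ X} (h : DivergentSeq g) :
    DivergentSeq fun n => (g n).symm := fun φ hφ k hk =>
  h φ hφ k.symm
    (by simpa only [comp_def, IsometryEquiv.symm_symm] using tendsto_isometryEquiv_symm hk)

lemma IsoCauchyIndivisible.cauchySeq_apply (hCI : IsoCauchyIndivisible X) {g : ℕ → X ≃ᵢ X}
    (hdiv : DivergentNet g) {x : X} (hx : CauchySeq fun n => g n x) (y : X) :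
    CauchySeq fun n => g n y := by
  -- `hCI` speaks about nets indexed by a type in another universe, so we index by `ULift ℕ`.
  have hmap : ∀ {β : Type _} (u : ℕ → β), map (u ∘ ULift.orderIso) atTop = map u atTop :=
    fun u => by rw [← map_map, OrderIso.map_atTop]
  have hdiv' : DivergentNet (g ∘ ULift.orderIso) := fun h hh => hdiv h (by
    rwa [MapClusterPt, hmap] at hh)
  have hmap' : ∀ z, map (fun i => (g ∘ ULift.orderIso) i z) atTop = map (fun n => g n z) atTop :=
    fun z => hmap fun n => g n z
  have := hCI _ (g ∘ ULift.orderIso) hdiv' ⟨x, by rwa [hmap']⟩ y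
  rwa [hmap'] at this

end IsometryGroup

section Ellis

variable {X : Type*} [MetricSpace X]

lemma isometry_hatIso (g : X ≃ᵢ X) : Isometry (hatIso g) := g.isometry.completion_map

lemma hatIso_coe (g : X ≃ᵢ X) (x : X) : hatIso g x = ((g x : X) : Completion X) :=
  Completion.map_coe g.isometry.uniformContinuous x

lemma hatIso_trans (g h : X ≃ᵢ X) : hatIso (g.trans h) = hatIso h ∘ hatIso g :=
  (Completion.map_comp h.isometry.uniformContinuous g.isometry.uniformContinuous).symm

lemma hatIso_apply_hatIso_symm (g : X ≃ᵢ X) (a : Completion X) :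
    hatIso g (hatIso g.symm a) = a := by
  rw [← comp_apply (f := hatIso g), hatIso, hatIso,
    Completion.map_comp g.isometry.uniformContinuous g.symm.isometry.uniformContinuous,
    g.self_comp_symm, Completion.map_id, id]

lemma tendsto_hatIso {ι : Type*} {l : Filter ι} {g : ι → X ≃ᵢ X} {h : X ≃ᵢ X}
    (hg : Tendsto g l (𝓝 h)) : Tendsto (fun i => hatIso (g i)) l (𝓝 (hatIso h)) := by
  refine (equicontinuous_of_forall_isometry fun i => isometry_hatIso (g i)).tendsto_of_dense
    (isometry_hatIso h).continuous Completion.denseRange_coe ?_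
  rintro _ ⟨x, rfl⟩
  simp only [hatIso_coe]
  exact (Completion.continuous_coe X).continuousAt.tendsto.comp (tendsto_isometryEquiv_iff.1 hg x)

lemma hatIso_mem_ellis (g : X ≃ᵢ X) : hatIso g ∈ Ellis X := subset_closure ⟨g, rfl⟩

lemma isometry_of_mem_ellis {f : Completion X → Completion X} (hf : f ∈ Ellis X) : Isometry f := by
  have hclosed : IsClosed {u : Completion X → Completion X | Isometry u} := by
    simp only [Isometry, ofPred_forall]
    exact isClosed_iInter fun a => isClosed_iInter fun b =>
      isClosed_eq ((continuous_apply a).edist (continuous_apply b)) continuous_const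
  exact closure_minimal (by rintro _ ⟨g, rfl⟩; exact isometry_hatIso g) hclosed hf

lemma equicontinuous_ellis : Equicontinuous fun f : Ellis X => (f : Completion X → Completion X) :=
  equicontinuous_of_forall_isometry fun f => isometry_of_mem_ellis f.2

lemma comp_mem_ellis {f p : Completion X → Completion X} (hf : f ∈ Ellis X) (hp : p ∈ Ellis X) :
    f ∘ p ∈ Ellis X := by
  have hleft : ∀ g, hatIso g ∘ p ∈ Ellis X := fun g =>
    map_mem_closure (f := (hatIso g ∘ ·))
      (continuous_pi fun a => (isometry_hatIso g).continuous.comp (continuous_apply a)) hp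
      (by rintro _ ⟨h, rfl⟩; exact ⟨h.trans g, hatIso_trans h g⟩)
  have hright := map_mem_closure (f := (· ∘ p)) (continuous_pi fun a => continuous_apply (p a)) hf
    (t := Ellis X) (by rintro _ ⟨g, rfl⟩; exact hleft g)
  rwa [Ellis, closure_closure] at hright

instance [SeparableSpace X] : PseudoMetrizableSpace (Ellis X) := by
  obtain ⟨D, hDc, hD⟩ := exists_countable_dense (Completion X)
  have := hDc.to_subtype
  exact (equicontinuous_ellis.isInducing_restrict IsInducing.subtypeVal hD).pseudoMetrizableSpace

end Ellis

section Subsequences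

variable {X : Type*} [MetricSpace X]

lemma exists_tendsto_hatIso_of_divergentNet (hCI : IsoCauchyIndivisible X) {g : ℕ → X ≃ᵢ X}
    (hdiv : DivergentNet g) {x : X} (hx : CauchySeq fun n => g n x) :
    ∃ F ∈ Ellis X, Tendsto (fun n => hatIso (g n)) atTop (𝓝 F) := by
  have hcauchy : ∀ a : Completion X, CauchySeq fun n => hatIso (g n) a := by
    refine fun a => (equicontinuous_of_forall_isometry fun n => isometry_hatIso (g n))
      |>.isClosed_setOf_cauchySeq.closure_subset_iff.2 ?_ (Completion.denseRange_coe a)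
    rintro _ ⟨y, rfl⟩
    simp only [mem_ofPred_eq, hatIso_coe]
    exact (Completion.uniformContinuous_coe X).comp_cauchySeq (hCI.cauchySeq_apply hdiv hx y)
  choose F hF using fun a => cauchySeq_tendsto_of_complete (hcauchy a)
  have hlim : Tendsto (fun n => hatIso (g n)) atTop (𝓝 F) := tendsto_pi_nhds.2 hF
  exact ⟨F, mem_closure_of_tendsto hlim (Eventually.of_forall fun n => ⟨g n, rfl⟩), hlim⟩

variable [SeparableSpace X]

lemma exists_subseq_tendsto_hatIso (hCI : IsoCauchyIndivisible X) (g : ℕ → X ≃ᵢ X) {x : X}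
    (hx : CauchySeq fun n => g n x) :
    ∃ F ∈ Ellis X, ∃ φ : ℕ → ℕ, StrictMono φ ∧
      Tendsto (fun j => hatIso (g (φ j))) atTop (𝓝 F) := by
  by_cases hdiv : DivergentNet g
  · obtain ⟨F, hF, hlim⟩ := exists_tendsto_hatIso_of_divergentNet hCI hdiv hx
    exact ⟨F, hF, id, strictMono_id, hlim⟩
  · obtain ⟨h, hcl⟩ : ∃ h, MapClusterPt h atTop g := by
      simpa only [DivergentNet, not_forall, not_not] using hdiv
    obtain ⟨φ, hφ, hlim⟩ := hcl.tendsto_subseq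
    exact ⟨hatIso h, hatIso_mem_ellis h, φ, hφ, tendsto_hatIso hlim⟩

lemma exists_subseq_tendsto_of_cauchySeq_coe (hCI : IsoCauchyIndivisible X)
    {f : ℕ → Completion X → Completion X} (hf : ∀ n, f n ∈ Ellis X) {x : X}
    (hx : CauchySeq fun n => f n x) :
    ∃ F ∈ Ellis X, ∃ φ : ℕ → ℕ, StrictMono φ ∧ Tendsto (fun j => f (φ j)) atTop (𝓝 F) := by
  obtain ⟨D, hDc, hD⟩ := exists_countable_dense (Completion X)
  obtain ⟨s, hs⟩ := (hDc.insert (x : Completion X)).exists_eq_range (insert_nonempty _ _)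
  obtain ⟨g, hfg⟩ := exists_seq_dist_tendsto_zero_of_mem_closure_range hf s
  obtain ⟨k, hk⟩ : (x : Completion X) ∈ range s := hs ▸ mem_insert _ _
  obtain ⟨z, hz⟩ := cauchySeq_tendsto_of_complete hx
  have hgx : Tendsto (fun n => hatIso (g n) x) atTop (𝓝 z) := hz.congr_dist (hk ▸ hfg k)
  simp only [hatIso_coe] at hgx
  obtain ⟨F, hF, φ, hφ, hgF⟩ := exists_subseq_tendsto_hatIso hCI g
    ((Completion.isUniformInducing_coe X).cauchy_map_iff.1 (by rw [map_map]; exact hgx.cauchySeq))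
  refine ⟨F, hF, φ, hφ, (equicontinuous_of_forall_isometry fun j => isometry_of_mem_ellis
    (hf (φ j))).tendsto_of_dense (isometry_of_mem_ellis hF).continuous hD fun a ha => ?_⟩
  obtain ⟨k, rfl⟩ : a ∈ range s := hs ▸ mem_insert_of_mem _ ha
  exact (tendsto_pi_nhds.1 hgF (s k)).congr_dist
    (by simpa only [comp_def, dist_comm] using (hfg k).comp hφ.tendsto_atTop)

lemma exists_rightInverse_of_mem_Xp (hCI : IsoCauchyIndivisible X) {y : Completion X}
    (hy : y ∈ Xp X) :
    ∃ p ∈ Ellis X, ∃ q ∈ Ellis X, ∃ x : X, p x = y ∧ RightInverse q p := by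
  obtain ⟨g, x, hdiv, hgx, hgx', hy⟩ := hy
  obtain ⟨p, hp, hgp⟩ := exists_tendsto_hatIso_of_divergentNet hCI hdiv.divergentNet hgx
  obtain ⟨q, hq, hgq⟩ := exists_tendsto_hatIso_of_divergentNet hCI hdiv.symm.divergentNet hgx'
  refine ⟨p, hp, q, hq, x, tendsto_nhds_unique ?_ hy, fun a => ?_⟩
  · simpa only [hatIso_coe] using tendsto_pi_nhds.1 hgp x
  · have hpq := (tendsto_apply_iff_of_isometry (fun n => isometry_hatIso (g n))
      (tendsto_pi_nhds.1 hgq a)).2 (tendsto_pi_nhds.1 hgp (q a))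
    simp only [hatIso_apply_hatIso_symm] at hpq
    exact (tendsto_nhds_unique tendsto_const_nhds hpq).symm

lemma exists_subseq_tendsto_of_mem_XcupXp (hCI : IsoCauchyIndivisible X) {f : ℕ → Ellis X}
    {y : Completion X} (hy : y ∈ XcupXp X)
    (hf : CauchySeq fun n => (f n : Completion X → Completion X) y) :
    ∃ F : Ellis X, ∃ φ : ℕ → ℕ, StrictMono φ ∧ Tendsto (f ∘ φ) atTop (𝓝 F) := by
  suffices ∃ F ∈ Ellis X, ∃ φ : ℕ → ℕ, StrictMono φ ∧
      Tendsto (fun j => (f (φ j) : Completion X → Completion X)) atTop (𝓝 F) by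
    obtain ⟨F, hF, φ, hφ, hlim⟩ := this
    exact ⟨⟨F, hF⟩, φ, hφ, tendsto_subtype_rng.2 hlim⟩
  rcases hy with ⟨x, rfl⟩ | hy
  · exact exists_subseq_tendsto_of_cauchySeq_coe hCI (fun n => (f n).2) hf
  · obtain ⟨p, hp, q, hq, x, rfl, hpq⟩ := exists_rightInverse_of_mem_Xp hCI hy
    obtain ⟨F, hF, φ, hφ, hlim⟩ :=
      exists_subseq_tendsto_of_cauchySeq_coe hCI (fun n => comp_mem_ellis (f n).2 hp) (x := x) hf
    refine ⟨F ∘ q, comp_mem_ellis hF hq, φ, hφ, ?_⟩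
    have hcomp := ((continuous_pi fun a => continuous_apply (q a)).tendsto F).comp hlim
    simpa only [comp_def, hpq _] using hcomp

end Subsequences

/-- Theorem 5.12 (properness part): the map
`ω : E × (X ∪ X_p) → (X ∪ X_p) × X̂`, `ω(f, y) = (y, f y)`, is a proper map. -/
theorem omega_isProperMap_on_XcupXp (X : Type*) [MetricSpace X]
    [TopologicalSpace.SeparableSpace X] (hCI : IsoCauchyIndivisible X) :
    IsProperMap (fun p : ↥(Ellis X) × ↥(XcupXp X) =>
      (p.2, (p.1 : Completion X → Completion X) (p.2 : Completion X))) := by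
  have heval :
      Continuous fun p : Ellis X × Completion X => (p.1 : Completion X → Completion X) p.2 :=
    continuous_eval_of_isometry continuous_subtype_val fun f => isometry_of_mem_ellis f.2
  refine isProperMap_iff_isCompact_preimage.2 ⟨continuous_snd.prodMk
    (heval.comp (continuous_fst.prodMk (continuous_subtype_val.comp continuous_snd))),
    fun K hK => IsSeqCompact.isCompact fun p hp => ?_⟩
  obtain ⟨⟨y, z⟩, hK, ψ, hψ, hlim⟩ := hK.tendsto_subseq hp
  have hy : Tendsto (fun n => (p (ψ n)).2) atTop (𝓝 y) := (continuous_fst.tendsto _).comp hlim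
  have hfy : Tendsto (fun n => ((p (ψ n)).1 : Completion X → Completion X) y) atTop (𝓝 z) :=
    (tendsto_apply_iff_of_isometry (fun n => isometry_of_mem_ellis (p (ψ n)).1.2)
      ((continuous_subtype_val.tendsto y).comp hy)).1 ((continuous_snd.tendsto _).comp hlim)
  obtain ⟨F, φ, hφ, hF⟩ := exists_subseq_tendsto_of_mem_XcupXp hCI y.2 hfy.cauchySeq
  have hFy : (F : Completion X → Completion X) y = z :=
    tendsto_nhds_unique ((continuous_apply (y : Completion X)).tendsto _ |>.comp
      (tendsto_subtype_rng.1 hF)) (hfy.comp hφ.tendsto_atTop)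
  refine ⟨(F, y), by simpa only [mem_preimage, hFy] using hK, ψ ∘ φ, hψ.comp hφ, ?_⟩
  exact hF.prodMk_nhds (hy.comp hφ.tendsto_atTop)
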